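/- Let N ∈ ℕ, let B be a subgroup of ℤ^N, and let γ ∈ ℤ^N be such that the set {b ∈ B : all coordinates of b+γ are ≥ 0} is finite, so that the Γ-series 𝓕_γ is a polynomial. Then for every index i, the partial derivative ∂𝓕_γ/∂z_i equals 𝓕_{γ−e_i}, where e_i ∈ ℤ^N is the i-th unit vector (the finiteness condition for γ−e_i follows from that for γ). -/

import Mathlib

/-!
Differentiation is linear, so `∂ᵢ` passes through the finite sum termwise. For a single term,
`∂ᵢ (z^β / β!) = βᵢ z^(β - eᵢ) / β! = z^(β - eᵢ) / (β - eᵢ)!` since `βᵢ! = βᵢ · (βᵢ - 1)!`;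
when `βᵢ = 0` both sides vanish, the right one because `β - eᵢ` has a negative coordinate.
-/

open MvPolynomial

/-- The term `z^β / β!` of a Γ-series: it is the monomial `z^β / ∏ᵢ βᵢ!` when all
coordinates of `β` are nonnegative, and `0` otherwise. -/
noncomputable def gammaTerm (N : ℕ) (β : Fin N → ℤ) : MvPolynomial (Fin N) ℚ :=
  if ∀ i, 0 ≤ β i then
    (∏ i, ((β i).toNat.factorial : ℚ))⁻¹ • monomial (Finsupp.equivFunOnFinite.symm fun i => (β i).toNat) 1
  else 0

/-- The Γ-series `𝓕_γ = Σ_{b ∈ B, b+γ ≥ 0} z^{b+γ}/∏ᵢ (bᵢ+γᵢ)!` of a lattice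
`B ≤ ℤ^N` with shift `γ`, as a polynomial over `ℚ` (defined via `finsum`, which is the
actual sum whenever the family has finite support). -/
noncomputable def GammaSeries (N : ℕ) (B : AddSubgroup (Fin N → ℤ)) (γ : Fin N → ℤ) :
    MvPolynomial (Fin N) ℚ :=
  ∑ᶠ b ∈ (B : Set (Fin N → ℤ)), gammaTerm N (b + γ)

section MonomialDivFactorial

variable {σ K : Type*} [Fintype σ] [Field K]

noncomputable def monomialDivFactorial (d : σ →₀ ℕ) : MvPolynomial σ K :=
  (∏ j, ((d j).factorial : K))⁻¹ • monomial d 1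

lemma prod_factorial_add_single [DecidableEq σ] (d : σ →₀ ℕ) (i : σ) :
    ∏ j, (((d + Finsupp.single i 1 : σ →₀ ℕ) j).factorial : K) =
      (d i + 1) * ∏ j, ((d j).factorial : K) := by
  have hfac (j : σ) : (((d + Finsupp.single i 1 : σ →₀ ℕ) j).factorial : K) =
      (if j = i then (d i + 1 : K) else 1) * (d j).factorial := by
    rcases eq_or_ne j i with rfl | hj
    · simp [Nat.factorial_succ]
    · simp [hj]
  simp only [hfac, Finset.prod_mul_distrib, Finset.prod_ite_eq', Finset.mem_univ, if_true]

lemma pderiv_monomialDivFactorial_add_single [CharZero K] (d : σ →₀ ℕ) (i : σ) :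
    pderiv i (monomialDivFactorial (d + Finsupp.single i 1) : MvPolynomial σ K) =
      monomialDivFactorial d := by
  classical
  have hne : (d i + 1 : K) ≠ 0 := by exact_mod_cast Nat.succ_ne_zero (d i)
  rw [monomialDivFactorial, monomialDivFactorial, prod_factorial_add_single, Derivation.map_smul,
    pderiv_monomial, add_tsub_cancel_right, smul_monomial, smul_monomial]
  congr 1
  simp [hne]

lemma pderiv_monomialDivFactorial_of_eq_zero {d : σ →₀ ℕ} {i : σ} (h : d i = 0) :
    pderiv i (monomialDivFactorial d : MvPolynomial σ K) = 0 := by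
  simp [monomialDivFactorial, h]

end MonomialDivFactorial

lemma gammaTerm_eq_ite (N : ℕ) (β : Fin N → ℤ) :
    gammaTerm N β = if ∀ i, 0 ≤ β i then
      monomialDivFactorial (Finsupp.equivFunOnFinite.symm fun i => (β i).toNat) else 0 :=
  rfl

lemma nonneg_of_gammaTerm_ne_zero {N : ℕ} {β : Fin N → ℤ} (h : gammaTerm N β ≠ 0) (i : Fin N) :
    0 ≤ β i := by
  by_contra hβ
  exact h (if_neg fun hall => hβ (hall i))

lemma pderiv_gammaTerm (N : ℕ) (β : Fin N → ℤ) (i : Fin N) :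
    pderiv i (gammaTerm N β) = gammaTerm N (β - Pi.single i 1) := by
  rw [gammaTerm_eq_ite, gammaTerm_eq_ite]
  by_cases hα : ∀ j, 0 ≤ (β - Pi.single i 1 : Fin N → ℤ) j
  · have hβ (j : Fin N) : 0 ≤ β j := by
      have := hα j
      rw [Pi.sub_apply, Pi.single_apply] at this
      split_ifs at this <;> omega
    have hexp : (Finsupp.equivFunOnFinite.symm fun j => (β j).toNat) =
        (Finsupp.equivFunOnFinite.symm fun j => ((β - Pi.single i 1 : Fin N → ℤ) j).toNat) +
          Finsupp.single i 1 := by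
      ext j
      have := hα j
      rcases eq_or_ne j i with rfl | hj
      · simp only [Pi.sub_apply, Pi.single_eq_same, Finsupp.coe_add, Pi.add_apply,
          Finsupp.equivFunOnFinite_symm_apply_apply, Finsupp.single_eq_same] at this ⊢
        omega
      · simp [hj]
    rw [if_pos hβ, if_pos hα, hexp, pderiv_monomialDivFactorial_add_single]
  · rw [if_neg hα]
    split_ifs with hβ
    · obtain ⟨j, hj⟩ := not_forall.mp hα
      have hji : j = i := by
        by_contra hji
        simp only [Pi.sub_apply, Pi.single_eq_of_ne hji, sub_zero] at hj
        exact hj (hβ j)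
      subst hji
      exact pderiv_monomialDivFactorial_of_eq_zero (by
        simp only [Pi.sub_apply, Pi.single_eq_same, Finsupp.equivFunOnFinite_symm_apply_apply] at hj ⊢
        omega)
    · exact map_zero _

/-- If the set `{b ∈ B : b+γ ≥ 0}` is finite (so that `𝓕_γ` is a polynomial), then for
every index `i` one has `∂𝓕_γ/∂z_i = 𝓕_{γ − e_i}`, where `e_i` is the `i`-th unit vector. -/
theorem pderiv_gammaSeries (N : ℕ) (B : AddSubgroup (Fin N → ℤ)) (γ : Fin N → ℤ)
    (hfin : {b : Fin N → ℤ | b ∈ B ∧ ∀ i, 0 ≤ b i + γ i}.Finite) (i : Fin N) :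
    pderiv i (GammaSeries N B γ) = GammaSeries N B (γ - Pi.single i 1) := by
  have hsupp : ((B : Set (Fin N → ℤ)) ∩ Function.support fun b => gammaTerm N (b + γ)).Finite :=
    hfin.subset fun b ⟨hbB, hb⟩ => ⟨hbB, nonneg_of_gammaTerm_ne_zero hb⟩
  rw [GammaSeries, GammaSeries]
  refine ((pderiv i).toLinearMap.toAddMonoidHom.map_finsum_mem' hsupp).trans ?_
  refine finsum_mem_congr rfl fun b _ => ?_
  rw [LinearMap.toAddMonoidHom_coe, Derivation.coeFn_coe, pderiv_gammaTerm, add_sub_assoc]
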